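/- arXiv:2506.01884 — 4 statements merged into one kernel-verified Lean document; each statement's English description precedes it below -/
import Mathlib

section
/- For any policy class Π ⊆ {-1,+1}^X and any π* : X → {-1,+1}, the policy eluder dimension is at most exponential in the maximum of the star number and threshold dimension: Edim_{π*}(Π) ≤ 4^{max{Sdim_{π*}(Π), Tdim_{π*}(Π)}}. Concretely, every eluder witness sequence of length m ≥ 4^k contains a subsequence of length k that witnesses either star number ≥ k or threshold dimension ≥ k. -/
/-!
Color each pair `j < i` of an eluder sequence by whether `π_j` agrees with `π*` at `x_i`. The
eluder condition already gives `π_i(x_j) = π*(x_j)` for `j < i` and `π_i(x_i) ≠ π*(x_i)`, so a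
subsequence whose pairs all have the agreeing color is a star sequence, and one whose pairs all
have the disagreeing color is a threshold sequence. The Erdős–Szekeres argument (remove the
least element and recurse into the larger color class of its edges) finds such a monochromatic
subsequence of length `k + 1` in any sequence of length `4 ^ k`.
-/

/-- Eluder witness sequence of length `m` for class `P` w.r.t. base function `g`:
`π_i(x_i) ≠ g(x_i)` for all `i`, and `π_i(x_j) = g(x_j)` for all `j < i`. -/
def IsEluderSeq {X : Type*} (P : Set (X → Bool)) (g : X → Bool) (m : ℕ)
    (x : Fin m → X) (p : Fin m → (X → Bool)) : Prop :=
  (∀ i, p i ∈ P) ∧ (∀ i, p i (x i) ≠ g (x i)) ∧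
    ∀ i j : Fin m, j < i → p i (x j) = g (x j)

/-- Star witness sequence of length `m`: `π_i(x_i) ≠ g(x_i)` and
`π_i(x_j) = g(x_j)` for all `j ≠ i`. -/
def IsStarSeq {X : Type*} (P : Set (X → Bool)) (g : X → Bool) (m : ℕ)
    (x : Fin m → X) (p : Fin m → (X → Bool)) : Prop :=
  (∀ i, p i ∈ P) ∧ (∀ i, p i (x i) ≠ g (x i)) ∧
    ∀ i j : Fin m, j ≠ i → p i (x j) = g (x j)

/-- Threshold witness sequence of length `m`: `π_i(x_j) = g(x_j)` for `j < i`
and `π_i(x_j) ≠ g(x_j)` for `j ≥ i`. -/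
def IsThresholdSeq {X : Type*} (P : Set (X → Bool)) (g : X → Bool) (m : ℕ)
    (x : Fin m → X) (p : Fin m → (X → Bool)) : Prop :=
  (∀ i, p i ∈ P) ∧ (∀ i j : Fin m, j < i → p i (x j) = g (x j)) ∧
    ∀ i j : Fin m, i ≤ j → p i (x j) ≠ g (x j)

/-- Policy eluder dimension of `P` w.r.t. `g` (as an extended natural number). -/
noncomputable def edim {X : Type*} (P : Set (X → Bool)) (g : X → Bool) : ℕ∞ :=
  ⨆ (m : ℕ) (_ : ∃ (x : Fin m → X) (p : Fin m → (X → Bool)), IsEluderSeq P g m x p), (m : ℕ∞)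

/-- Star number of `P` w.r.t. `g`. -/
noncomputable def sdim {X : Type*} (P : Set (X → Bool)) (g : X → Bool) : ℕ∞ :=
  ⨆ (m : ℕ) (_ : ∃ (x : Fin m → X) (p : Fin m → (X → Bool)), IsStarSeq P g m x p), (m : ℕ∞)

/-- Threshold dimension of `P` w.r.t. `g`. -/
noncomputable def tdim {X : Type*} (P : Set (X → Bool)) (g : X → Bool) : ℕ∞ :=
  ⨆ (m : ℕ) (_ : ∃ (x : Fin m → X) (p : Fin m → (X → Bool)), IsThresholdSeq P g m x p), (m : ℕ∞)


section Ramsey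

variable {α : Type*} [LinearOrder α] (c : α → α → Bool)

def IsMonochromatic (b : Bool) (A : Finset α) : Prop :=
  ∀ x ∈ A, ∀ y ∈ A, x < y → c x y = b

variable {c}

theorem IsMonochromatic.insert {b : Bool} {A : Finset α} {z : α} (hA : IsMonochromatic c b A)
    (hz : ∀ y ∈ A, z < y ∧ c z y = b) : IsMonochromatic c b (insert z A) := by
  intro x hx y hy hxy
  rcases Finset.mem_insert.mp hx with rfl | hxA <;> rcases Finset.mem_insert.mp hy with rfl | hyA
  · exact absurd hxy (lt_irrefl _)
  · exact (hz y hyA).2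
  · exact absurd ((hz x hxA).1.trans hxy) (lt_irrefl _)
  · exact hA x hxA y hyA hxy

theorem IsMonochromatic.singleton (b : Bool) (x : α) : IsMonochromatic c b {x} := by
  intro x hx y hy hxy
  rw [Finset.mem_singleton] at hx hy
  exact absurd (hx ▸ hy ▸ hxy) (lt_irrefl _)

theorem exists_two_pow_le_card_filter_erase {β : Type*} [DecidableEq β] (f : β → Bool)
    {S : Finset β} {z : β} (hz : z ∈ S) {n : ℕ} (hS : 2 ^ (n + 1) ≤ S.card) :
    ∃ b, 2 ^ n ≤ ((S.erase z).filter (fun y => f y = b)).card := by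
  obtain ⟨b, -, hb⟩ := Finset.exists_lt_card_fiber_of_mul_lt_card_of_maps_to (n := 2 ^ n - 1)
    (t := Finset.univ) (fun y _ => Finset.mem_univ (f y)) (by
      rw [Finset.card_erase_of_mem hz, Finset.card_univ, Fintype.card_bool]
      rw [pow_succ] at hS
      have := Nat.one_le_two_pow (n := n)
      omega)
  exact ⟨b, by omega⟩

variable (c)

/-- Ordered form of `R(s + 1, t + 1) ≤ 2 ^ (s + t)`, with `s = r true` and `t = r false`. -/
theorem exists_isMonochromatic_of_two_pow_le (r : Bool → ℕ) (S : Finset α)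
    (hS : 2 ^ (r true + r false) ≤ S.card) :
    ∃ b, ∃ A ⊆ S, A.card = r b + 1 ∧ IsMonochromatic c b A := by
  have hSne : S.Nonempty := Finset.card_pos.mp (lt_of_lt_of_le (by positivity) hS)
  by_cases hr : ∃ b, r b = 0
  · obtain ⟨b, hb⟩ := hr
    obtain ⟨x, hx⟩ := hSne
    exact ⟨b, {x}, by simpa using hx, by simp [hb], IsMonochromatic.singleton b x⟩
  push Not at hr
  set z := S.min' hSne
  have hzS : z ∈ S := S.min'_mem hSne
  have hsum : r true + r false - 1 + 1 = r true + r false := by have := hr true; omega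
  obtain ⟨b, hb⟩ := exists_two_pow_le_card_filter_erase (c z) hzS (hsum ▸ hS)
  set N := (S.erase z).filter (fun y => c z y = b)
  set r' := Function.update r b (r b - 1)
  have hr' : r' true + r' false = r true + r false - 1 := by
    have := hr true; have := hr false
    cases b <;> simp [r'] <;> omega
  obtain ⟨b', A, hAN, hAcard, hA⟩ := exists_isMonochromatic_of_two_pow_le r' N (hr' ▸ hb)
  have hAS : A ⊆ S := hAN.trans ((Finset.filter_subset _ _).trans (Finset.erase_subset _ _))
  by_cases hbb : b' = b
  · subst hbb
    have hzA : ∀ y ∈ A, z < y ∧ c z y = b' := fun y hy =>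
      ⟨S.min'_lt_of_mem_erase_min' hSne (Finset.mem_filter.mp (hAN hy)).1,
        (Finset.mem_filter.mp (hAN hy)).2⟩
    refine ⟨b', insert z A, Finset.insert_subset hzS hAS, ?_, hA.insert hzA⟩
    rw [Finset.card_insert_of_notMem (fun h => lt_irrefl z (hzA z h).1), hAcard]
    have := hr b'
    simp only [r', Function.update_self]
    omega
  · exact ⟨b', A, hAS, by simpa [r', Function.update_of_ne hbb] using hAcard, hA⟩
termination_by r true + r false
decreasing_by
  push Not at hr
  simp only [r'] at hr'
  have := hr true
  omega

end Ramsey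

theorem exists_strictMono_monochromatic_of_four_pow_le {m k : ℕ} (c : Fin m → Fin m → Bool)
    (hm : 4 ^ k ≤ m) :
    ∃ (φ : Fin (k + 1) → Fin m) (b : Bool), StrictMono φ ∧ ∀ i j, i < j → c (φ i) (φ j) = b := by
  obtain ⟨b, A, -, hAcard, hA⟩ := exists_isMonochromatic_of_two_pow_le c (fun _ => k) Finset.univ
    (by simpa [← two_mul, pow_mul] using hm)
  refine ⟨A.orderEmbOfFin hAcard, b, (A.orderEmbOfFin hAcard).strictMono, fun i j hij => ?_⟩
  exact hA _ (A.orderEmbOfFin_mem hAcard i) _ (A.orderEmbOfFin_mem hAcard j)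
    ((A.orderEmbOfFin hAcard).strictMono hij)

section Witnesses

variable {X : Type*} {P : Set (X → Bool)} {g : X → Bool} {m k : ℕ} {x : Fin m → X}
  {p : Fin m → X → Bool}

theorem IsEluderSeq.isStarSeq_comp (h : IsEluderSeq P g m x p) {φ : Fin k → Fin m}
    (hφ : StrictMono φ) (hagree : ∀ i j, i < j → p (φ i) (x (φ j)) = g (x (φ j))) :
    IsStarSeq P g k (x ∘ φ) (p ∘ φ) := by
  refine ⟨fun i => h.1 _, fun i => h.2.1 _, fun i j hji => ?_⟩
  rcases hji.lt_or_gt with hji | hij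
  · exact h.2.2 _ _ (hφ hji)
  · exact hagree i j hij

theorem IsEluderSeq.isThresholdSeq_comp (h : IsEluderSeq P g m x p) {φ : Fin k → Fin m}
    (hφ : StrictMono φ) (hdisagree : ∀ i j, i < j → p (φ i) (x (φ j)) ≠ g (x (φ j))) :
    IsThresholdSeq P g k (x ∘ φ) (p ∘ φ) := by
  refine ⟨fun i => h.1 _, fun i j hji => h.2.2 _ _ (hφ hji), fun i j hij => ?_⟩
  rcases hij.eq_or_lt with rfl | hij
  · exact h.2.1 _
  · exact hdisagree i j hij

theorem IsEluderSeq.exists_star_or_threshold_subseq (h : IsEluderSeq P g m x p)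
    (hm : 4 ^ k ≤ m) :
    ∃ φ : Fin (k + 1) → Fin m, StrictMono φ ∧
      (IsStarSeq P g (k + 1) (x ∘ φ) (p ∘ φ) ∨ IsThresholdSeq P g (k + 1) (x ∘ φ) (p ∘ φ)) := by
  obtain ⟨φ, b, hφ, hc⟩ :=
    exists_strictMono_monochromatic_of_four_pow_le (fun j i => decide (p j (x i) = g (x i))) hm
  refine ⟨φ, hφ, ?_⟩
  cases b
  · exact .inr (h.isThresholdSeq_comp hφ fun i j hij => of_decide_eq_false (hc i j hij))
  · exact .inl (h.isStarSeq_comp hφ fun i j hij => of_decide_eq_true (hc i j hij))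

theorem IsStarSeq.le_sdim (h : IsStarSeq P g m x p) : (m : ℕ∞) ≤ sdim P g :=
  le_iSup₂_of_le m ⟨x, p, h⟩ le_rfl

theorem IsThresholdSeq.le_tdim (h : IsThresholdSeq P g m x p) : (m : ℕ∞) ≤ tdim P g :=
  le_iSup₂_of_le m ⟨x, p, h⟩ le_rfl

end Witnesses

/-- `Edim_{π*}(Π) ≤ 4^{max{Sdim_{π*}(Π), Tdim_{π*}(Π)}}`; concretely, every
eluder witness sequence of length `m ≥ 4^k` contains a subsequence of length `k` that
witnesses either the star number or the threshold dimension. -/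
theorem eluder_le_four_pow_max_star_threshold {X : Type*} (P : Set (X → Bool)) (g : X → Bool) :
    (∀ k : ℕ, max (sdim P g) (tdim P g) ≤ (k : ℕ∞) → edim P g ≤ ((4 ^ k : ℕ) : ℕ∞)) ∧
    (∀ (m k : ℕ) (x : Fin m → X) (p : Fin m → (X → Bool)),
      IsEluderSeq P g m x p → 4 ^ k ≤ m →
      ∃ φ : Fin k → Fin m, StrictMono φ ∧
        (IsStarSeq P g k (x ∘ φ) (p ∘ φ) ∨ IsThresholdSeq P g k (x ∘ φ) (p ∘ φ))) := by
  refine ⟨fun k hk => iSup₂_le fun m ⟨x, p, hseq⟩ => ?_, fun m k x p hseq hm => ?_⟩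
  · by_contra hlt
    obtain ⟨φ, -, hφ⟩ := hseq.exists_star_or_threshold_subseq (k := k)
      (Nat.cast_lt.mp (not_le.mp hlt)).le
    have hwit : ((k + 1 : ℕ) : ℕ∞) ≤ max (sdim P g) (tdim P g) :=
      hφ.elim (fun h => h.le_sdim.trans (le_max_left _ _))
        (fun h => h.le_tdim.trans (le_max_right _ _))
    exact absurd (Nat.cast_le.mp (hwit.trans hk)) (by omega)
  · cases k with
    | zero =>
      exact ⟨Fin.elim0, fun i => i.elim0,
        .inl ⟨fun i => i.elim0, fun i => i.elim0, fun i => i.elim0⟩⟩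
    | succ k =>
      exact hseq.exists_star_or_threshold_subseq
        ((Nat.pow_le_pow_right (by norm_num) k.le_succ).trans hm)
end

section
/- For any policy class Π ⊆ {-1,+1}^X and any base function π* : X → {-1,+1}, the policy eluder dimension with respect to π* is at most the sum of the policy eluder dimensions with respect to the constant functions: Edim_{π*}(Π) ≤ Edim_{+1}(Π) + Edim_{-1}(Π). -/
/-- `Edim_{π*}(Π) ≤ Edim_{+1}(Π) + Edim_{-1}(Π)`
(`true` plays the role of the constant `+1` and `false` of the constant `-1`). -/
theorem edim_le_edim_const_add_edim_const {X : Type*} (P : Set (X → Bool)) (g : X → Bool) :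
    edim P g ≤ edim P (fun _ => true) + edim P (fun _ => false) := by
  have key : ∀ (b : Bool) (m : ℕ) (x : Fin m → X) (p : Fin m → (X → Bool)),
      IsEluderSeq P g m x p →
      (((Finset.univ.filter (fun i : Fin m => g (x i) = b)).card : ℕ∞) ≤
        edim P (fun _ => b)) := by
    intro b m x p ⟨hP, hne, heq⟩
    classical
    let S := Finset.univ.filter (fun i : Fin m => g (x i) = b)
    let k := S.card
    have e : Fin k ≃o S := S.orderIsoOfFin rfl
    have hmem : ∀ i : Fin k, g (x (e i)) = b := fun i =>
      (Finset.mem_filter.mp (e i).2).2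
    have hwit : ∃ (x' : Fin k → X) (p' : Fin k → (X → Bool)),
        IsEluderSeq P (fun _ => b) k x' p' := by
      refine ⟨fun i => x (e i), fun i => p (e i), fun i => hP _, ?_, ?_⟩
      · intro i
        have := hne (e i)
        rwa [hmem i] at this
      · intro i j hij
        have hlt : (e j : Fin m) < e i := by
          exact_mod_cast (e.lt_iff_lt.mpr hij)
        show p (e i) (x (e j)) = b
        rw [heq _ _ hlt, hmem j]
    calc (k : ℕ∞) ≤ ⨆ (_ : ∃ (x' : Fin k → X) (p' : Fin k → (X → Bool)),
          IsEluderSeq P (fun _ => b) k x' p'), (k : ℕ∞) := le_iSup_of_le hwit le_rfl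
      _ ≤ edim P (fun _ => b) := le_iSup (fun m => ⨆ (_ : ∃ (x' : Fin m → X)
          (p' : Fin m → (X → Bool)), IsEluderSeq P (fun _ => b) m x' p'), (m : ℕ∞)) k
  rw [edim]
  refine iSup₂_le fun m hex => ?_
  obtain ⟨x, p, hxp⟩ := hex
  have hcard : (Finset.univ.filter (fun i : Fin m => g (x i) = true)).card +
      (Finset.univ.filter (fun i : Fin m => g (x i) = false)).card = m := by
    have := Finset.card_filter_add_card_filter_not
      (s := (Finset.univ : Finset (Fin m))) (p := fun i => g (x i) = true)
    simp only [Finset.card_univ, Fintype.card_fin, Bool.not_eq_true] at this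
    exact this
  calc (m : ℕ∞) = ((Finset.univ.filter (fun i : Fin m => g (x i) = true)).card : ℕ∞) +
        ((Finset.univ.filter (fun i : Fin m => g (x i) = false)).card : ℕ∞) := by
        rw [← Nat.cast_add, hcard]
    _ ≤ edim P (fun _ => true) + edim P (fun _ => false) :=
        add_le_add (key true m x p hxp) (key false m x p hxp)
end

section
/- Existence of dense block-free binary matrices: fix ε ∈ (0, 1/10) and ℓ ≥ 1, and let N = ⌊1/(6ε^ℓ)⌋. For any integer d with (16 ℓ log(1/ε))/ε ≤ d ≤ (1/20)·exp(1/(48 ε^{ℓ-1})), there exists a binary matrix B ∈ {0,1}^{N×d} such that: (1) every row sum is at least εd/2; (2) every column sum lies in [εN/2, 2εN]; (3) B is (⌈ℓ log d⌉, ℓ)-block-free, i.e., for every set I ⊆ [N] of size ⌈ℓ log d⌉ and every set J ⊆ [d] of size ℓ, there is some (i,j) ∈ I×J with B_{ij} = 0. -/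
open scoped Classical

noncomputable section

namespace BFaux

open Finset

def wt (ε : ℝ) (b : Bool) : ℝ := if b then ε else 1 - ε

def Wv (ε : ℝ) {α : Type*} [Fintype α] (f : α → Bool) : ℝ := ∏ a, wt ε (f a)

def cnt {α : Type*} [Fintype α] (f : α → Bool) : ℕ :=
  (Finset.univ.filter fun a => f a = true).card

def ind (p : Prop) : ℝ := if p then 1 else 0

lemma ind_nonneg (p : Prop) : 0 ≤ ind p := by unfold ind; split <;> norm_num

lemma ind_eq_one {p : Prop} (h : p) : ind p = 1 := if_pos h

lemma ind_le_ind {p q : Prop} (h : p → q) : ind p ≤ ind q := by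
  unfold ind; split
  · rw [if_pos (h (by assumption))]
  · exact ind_nonneg q

lemma master {α β : Type*} [Fintype α] [DecidableEq α] [Fintype β] (g : α → β → ℝ) :
    ∑ f : α → β, ∏ a, g a (f a) = ∏ a, ∑ b, g a b :=
  (Fintype.prod_sum g).symm

variable {ε : ℝ}

lemma wt_nonneg (hε0 : 0 ≤ ε) (hε1 : ε ≤ 1) (b : Bool) : 0 ≤ wt ε b := by
  unfold wt; cases b <;> simp <;> linarith

lemma Wv_nonneg (hε0 : 0 ≤ ε) (hε1 : ε ≤ 1) {α : Type*} [Fintype α] (f : α → Bool) :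
    0 ≤ Wv ε f :=
  Finset.prod_nonneg fun a _ => wt_nonneg hε0 hε1 _

lemma sum_Wv {α : Type*} [Fintype α] [DecidableEq α] : ∑ f : α → Bool, Wv ε f = 1 := by
  classical
  unfold Wv
  rw [master]
  have h : ∑ b : Bool, wt ε b = 1 := by
    rw [Fintype.sum_bool]; unfold wt; norm_num
  simp only [h, Finset.prod_const_one]
lemma pow_cnt_eq_prod {α : Type*} [Fintype α] (μ : ℝ) (f : α → Bool) :
    μ ^ cnt f = ∏ a, (if f a then μ else 1) := by
  classical
  unfold cnt
  rw [Finset.prod_ite, Finset.prod_const, Finset.prod_const, one_pow, mul_one]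

lemma sum_Wv_mul_pow {α : Type*} [Fintype α] [DecidableEq α] (μ : ℝ) :
    ∑ f : α → Bool, Wv ε f * μ ^ cnt f = (1 - ε + ε * μ) ^ Fintype.card α := by
  classical
  have h : ∀ f : α → Bool, Wv ε f * μ ^ cnt f
      = ∏ a, (wt ε (f a) * (if f a then μ else 1)) := by
    intro f
    rw [pow_cnt_eq_prod, Wv, ← Finset.prod_mul_distrib]
  simp only [h]
  rw [master (fun (_ : α) (b : Bool) => wt ε b * (if b then μ else 1))]
  have h2 : (∑ b : Bool, wt ε b * (if b then μ else 1)) = 1 - ε + ε * μ := by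
    rw [Fintype.sum_bool]
    unfold wt; norm_num; ring
  simp only [h2, Finset.prod_const, Finset.card_univ]

lemma tail_upper {α : Type*} [Fintype α] [DecidableEq α] (hε0 : 0 ≤ ε) (hε1 : ε ≤ 1)
    {lam : ℝ} (hlam : 1 ≤ lam) (a : ℝ) :
    ∑ f : α → Bool, Wv ε f * ind (a ≤ (cnt f : ℝ))
      ≤ Real.exp (-(a * Real.log lam)) * (1 - ε + ε * lam) ^ Fintype.card α := by
  classical
  have hlam0 : 0 < lam := lt_of_lt_of_le one_pos hlam
  have key : ∀ f : α → Bool, Wv ε f * ind (a ≤ (cnt f : ℝ))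
      ≤ Real.exp (-(a * Real.log lam)) * (Wv ε f * lam ^ cnt f) := by
    intro f
    by_cases h : a ≤ (cnt f : ℝ)
    · rw [ind_eq_one h, mul_one]
      have hpow : lam ^ cnt f = Real.exp ((cnt f : ℝ) * Real.log lam) := by
        rw [Real.exp_nat_mul, Real.exp_log hlam0]
      rw [hpow, ← mul_assoc, mul_comm (Real.exp _) (Wv ε f), mul_assoc, ← Real.exp_add]
      nth_rewrite 1 [← mul_one (Wv ε f)]
      apply mul_le_mul_of_nonneg_left _ (Wv_nonneg hε0 hε1 f)
      rw [← Real.exp_zero]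
      apply Real.exp_le_exp.mpr
      have hlog : 0 ≤ Real.log lam := Real.log_nonneg hlam
      nlinarith
    · rw [ind, if_neg h, mul_zero]
      exact mul_nonneg (Real.exp_nonneg _)
        (mul_nonneg (Wv_nonneg hε0 hε1 f) (pow_nonneg (le_of_lt (lt_of_lt_of_le one_pos hlam)) _))
  calc ∑ f : α → Bool, Wv ε f * ind (a ≤ (cnt f : ℝ))
      ≤ ∑ f : α → Bool, Real.exp (-(a * Real.log lam)) * (Wv ε f * lam ^ cnt f) :=
        Finset.sum_le_sum fun f _ => key f
    _ = Real.exp (-(a * Real.log lam)) * ∑ f : α → Bool, Wv ε f * lam ^ cnt f := by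
        rw [Finset.mul_sum]
    _ = _ := by rw [sum_Wv_mul_pow]

lemma tail_lower {α : Type*} [Fintype α] [DecidableEq α] (hε0 : 0 ≤ ε) (hε1 : ε ≤ 1)
    {lam : ℝ} (hlam0 : 0 < lam) (hlam : lam ≤ 1) (a : ℝ) :
    ∑ f : α → Bool, Wv ε f * ind ((cnt f : ℝ) ≤ a)
      ≤ Real.exp (-(a * Real.log lam)) * (1 - ε + ε * lam) ^ Fintype.card α := by
  classical
  have key : ∀ f : α → Bool, Wv ε f * ind ((cnt f : ℝ) ≤ a)
      ≤ Real.exp (-(a * Real.log lam)) * (Wv ε f * lam ^ cnt f) := by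
    intro f
    by_cases h : (cnt f : ℝ) ≤ a
    · rw [ind_eq_one h, mul_one]
      have hpow : lam ^ cnt f = Real.exp ((cnt f : ℝ) * Real.log lam) := by
        rw [Real.exp_nat_mul, Real.exp_log hlam0]
      rw [hpow, ← mul_assoc, mul_comm (Real.exp _) (Wv ε f), mul_assoc, ← Real.exp_add]
      nth_rewrite 1 [← mul_one (Wv ε f)]
      apply mul_le_mul_of_nonneg_left _ (Wv_nonneg hε0 hε1 f)
      rw [← Real.exp_zero]
      apply Real.exp_le_exp.mpr
      have hlog : Real.log lam ≤ 0 := Real.log_nonpos hlam0.le hlam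
      nlinarith
    · rw [ind, if_neg h, mul_zero]
      exact mul_nonneg (Real.exp_nonneg _)
        (mul_nonneg (Wv_nonneg hε0 hε1 f) (pow_nonneg hlam0.le _))
  calc ∑ f : α → Bool, Wv ε f * ind ((cnt f : ℝ) ≤ a)
      ≤ ∑ f : α → Bool, Real.exp (-(a * Real.log lam)) * (Wv ε f * lam ^ cnt f) :=
        Finset.sum_le_sum fun f _ => key f
    _ = Real.exp (-(a * Real.log lam)) * ∑ f : α → Bool, Wv ε f * lam ^ cnt f := by
        rw [Finset.mul_sum]
    _ = _ := by rw [sum_Wv_mul_pow]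

lemma sum_Wv_allTrue {α : Type*} [Fintype α] [DecidableEq α] (S : Finset α) :
    ∑ f : α → Bool, Wv ε f * ind (∀ a ∈ S, f a = true) = ε ^ S.card := by
  classical
  have h : ∀ f : α → Bool, Wv ε f * ind (∀ a ∈ S, f a = true)
      = ∏ a, (wt ε (f a) * (if a ∈ S then ind (f a = true) else 1)) := by
    intro f
    have hsplit : (∏ a, (wt ε (f a) * (if a ∈ S then ind (f a = true) else 1)))
        = Wv ε f * ∏ a, (if a ∈ S then ind (f a = true) else 1) := by
      rw [Wv, ← Finset.prod_mul_distrib]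
    rw [hsplit]
    congr 1
    by_cases hf : ∀ a ∈ S, f a = true
    · rw [ind_eq_one hf]
      symm
      apply Finset.prod_eq_one
      intro a _
      by_cases ha : a ∈ S
      · rw [if_pos ha, ind_eq_one (hf a ha)]
      · rw [if_neg ha]
    · rw [ind, if_neg hf]
      push_neg at hf
      obtain ⟨a0, ha0S, ha0⟩ := hf
      exact (Finset.prod_eq_zero (Finset.mem_univ a0)
        (by rw [if_pos ha0S, ind, if_neg ha0])).symm
  simp only [h]
  rw [master (fun (a : α) (b : Bool) => wt ε b * (if a ∈ S then ind (b = true) else 1))]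
  have h2 : ∀ a : α, (∑ b : Bool, wt ε b * (if a ∈ S then ind (b = true) else 1))
      = if a ∈ S then ε else 1 := by
    intro a
    rw [Fintype.sum_bool]
    by_cases ha : a ∈ S <;> simp [ha, wt, ind]
  simp only [h2]
  rw [Finset.prod_ite_mem, Finset.univ_inter, Finset.prod_const]
/-- total weight of matrices is 1 -/
lemma sum_Wmat {α β : Type*} [Fintype α] [Fintype β] [DecidableEq α] [DecidableEq β] :
    ∑ B : α → β → Bool, (∏ a, Wv ε (B a)) = 1 := by
  classical
  rw [master (fun (_ : α) (f : β → Bool) => Wv ε f)]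
  simp only [sum_Wv, Finset.prod_const_one]

/-- marginalize an event depending on one row -/
lemma E_pick {α β : Type*} [Fintype α] [Fintype β] [DecidableEq α] [DecidableEq β] (a0 : α) (P : (β → Bool) → Prop) :
    ∑ B : α → β → Bool, (∏ a, Wv ε (B a)) * ind (P (B a0))
      = ∑ f : β → Bool, Wv ε f * ind (P f) := by
  classical
  have h : ∀ B : α → β → Bool, (∏ a, Wv ε (B a)) * ind (P (B a0))
      = ∏ a, (Wv ε (B a) * (if a = a0 then ind (P (B a)) else 1)) := by
    intro B
    rw [Finset.prod_mul_distrib]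
    congr 1
    rw [Finset.prod_ite_eq' Finset.univ a0 (fun a => ind (P (B a))), if_pos (Finset.mem_univ a0)]
  simp only [h]
  rw [master (fun (a : α) (f : β → Bool) => Wv ε f * (if a = a0 then ind (P f) else 1))]
  rw [Finset.prod_eq_single a0]
  · simp
  · intro a _ ha
    simp only [if_neg ha, mul_one, sum_Wv]
  · intro h; exact absurd (Finset.mem_univ a0) h

/-- marginalize an event depending on one column -/
lemma E_pick_col {α β : Type*} [Fintype α] [Fintype β] [DecidableEq α] [DecidableEq β] (b0 : β) (P : (α → Bool) → Prop) :
    ∑ B : α → β → Bool, (∏ a, Wv ε (B a)) * ind (P (fun a => B a b0))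
      = ∑ f : α → Bool, Wv ε f * ind (P f) := by
  classical
  have hbij : Function.Bijective (fun (C : β → α → Bool) (a : α) (b : β) => C b a) := by
    constructor
    · intro C C' h
      funext b a
      exact congrFun (congrFun h a) b
    · intro B
      exact ⟨fun b a => B a b, rfl⟩
  rw [← Fintype.sum_bijective _ hbij _ _ (fun C => rfl)]
  have h : ∀ C : β → α → Bool,
      (∏ a, Wv ε (fun b => C b a)) * ind (P (fun a => C b0 a))
        = (∏ b, Wv ε (C b)) * ind (P (C b0)) := by
    intro C
    congr 1
    · unfold Wv
      exact Finset.prod_comm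
  simp only [h]
  exact E_pick b0 P

/-- weight of an all-ones block -/
lemma E_block {α β : Type*} [Fintype α] [Fintype β] [DecidableEq α] [DecidableEq β] (I : Finset α) (J : Finset β) :
    ∑ B : α → β → Bool, (∏ a, Wv ε (B a)) * ind (∀ i ∈ I, ∀ j ∈ J, B i j = true)
      = ε ^ (I.card * J.card) := by
  classical
  have h : ∀ B : α → β → Bool, (∏ a, Wv ε (B a)) * ind (∀ i ∈ I, ∀ j ∈ J, B i j = true)
      = ∏ a, (Wv ε (B a) * (if a ∈ I then ind (∀ j ∈ J, B a j = true) else 1)) := by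
    intro B
    rw [Finset.prod_mul_distrib]
    congr 1
    by_cases hB : ∀ i ∈ I, ∀ j ∈ J, B i j = true
    · rw [ind_eq_one hB]
      symm
      apply Finset.prod_eq_one
      intro a _
      by_cases ha : a ∈ I
      · rw [if_pos ha, ind_eq_one (hB a ha)]
      · rw [if_neg ha]
    · rw [ind, if_neg hB]
      push_neg at hB
      obtain ⟨i0, hi0, j0, hj0, hBij⟩ := hB
      symm
      apply Finset.prod_eq_zero (Finset.mem_univ i0)
      rw [if_pos hi0, ind, if_neg]
      push_neg
      exact ⟨j0, hj0, hBij⟩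
  simp only [h]
  rw [master (fun (a : α) (f : β → Bool) =>
    Wv ε f * (if a ∈ I then ind (∀ j ∈ J, f j = true) else 1))]
  have h2 : ∀ a : α, (∑ f : β → Bool, Wv ε f * (if a ∈ I then ind (∀ j ∈ J, f j = true) else 1))
      = if a ∈ I then ε ^ J.card else 1 := by
    intro a
    by_cases ha : a ∈ I
    · simp only [if_pos ha]
      exact sum_Wv_allTrue J
    · simp only [if_neg ha, mul_one, sum_Wv]
  simp only [h2]
  rw [Finset.prod_ite_mem, Finset.univ_inter, Finset.prod_const, ← pow_mul, mul_comm J.card]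

end BFaux

set_option maxHeartbeats 2000000 in
/-- existence of dense block-free binary matrices. With
`N = ⌊1/(6ε^ℓ)⌋` and `(16 ℓ log(1/ε))/ε ≤ d ≤ (1/20)·exp(1/(48 ε^{ℓ-1}))`, there is a
binary matrix `B ∈ {0,1}^{N×d}` whose row sums are at least `εd/2`, whose column sums lie
in `[εN/2, 2εN]`, and which is `(⌈ℓ log d⌉, ℓ)`-block-free. -/
theorem exists_dense_block_free_matrix (ε : ℝ) (l : ℕ)
    (hε0 : 0 < ε) (hε1 : ε < 1 / 10) (hl : 1 ≤ l) (d : ℕ)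
    (hd_lb : 16 * l * Real.log (1 / ε) / ε ≤ (d : ℝ))
    (hd_ub : (d : ℝ) ≤ (1 / 20) * Real.exp (1 / (48 * ε ^ (l - 1)))) :
    ∃ B : Fin (⌊1 / (6 * ε ^ l)⌋₊) → Fin d → Bool,
      (∀ i, ε * d / 2 ≤ ((Finset.univ.filter fun j => B i j = true).card : ℝ)) ∧
      (∀ j, ε * (⌊1 / (6 * ε ^ l)⌋₊ : ℝ) / 2 ≤
            ((Finset.univ.filter fun i => B i j = true).card : ℝ) ∧
          ((Finset.univ.filter fun i => B i j = true).card : ℝ) ≤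
            2 * ε * (⌊1 / (6 * ε ^ l)⌋₊ : ℝ)) ∧
      (∀ I : Finset (Fin (⌊1 / (6 * ε ^ l)⌋₊)), I.card = ⌈(l : ℝ) * Real.log d⌉₊ →
        ∀ J : Finset (Fin d), J.card = l → ∃ i ∈ I, ∃ j ∈ J, B i j = false) := by
  classical
  obtain ⟨m, rfl⟩ : ∃ m, l = m + 1 := ⟨l - 1, (Nat.succ_pred_eq_of_pos hl).symm⟩
  rw [Nat.add_sub_cancel] at hd_ub
  set N := ⌊1 / (6 * ε ^ (m + 1))⌋₊ with hNdef
  set k := ⌈((m + 1 : ℕ) : ℝ) * Real.log d⌉₊ with hkdef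
  -- basic numeric facts
  have hε1' : ε < 1 := by linarith
  have hεle : ε ≤ 1 := hε1'.le
  have hm1 : (1 : ℝ) ≤ ((m + 1 : ℕ) : ℝ) := by exact_mod_cast Nat.one_le_iff_ne_zero.mpr (by omega)
  have hpowpos : (0:ℝ) < 6 * ε ^ (m+1) := by positivity
  have hNle : (N : ℝ) ≤ 1 / (6 * ε ^ (m+1)) := Nat.floor_le (by positivity)
  have hNgt : 1 / (6 * ε ^ (m+1)) - 1 < (N:ℝ) := by
    have := Nat.lt_floor_add_one (1 / (6 * ε ^ (m+1))); linarith
  have hNεl : (N:ℝ) * ε^(m+1) ≤ 1/6 := by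
    have h := mul_le_mul_of_nonneg_right hNle (le_of_lt (pow_pos hε0 (m+1)))
    rw [div_mul_eq_mul_div, one_mul] at h
    calc (N:ℝ) * ε^(m+1) ≤ ε^(m+1) / (6 * ε^(m+1)) := h
      _ = 1/6 := by field_simp
  have hεmpos : (0:ℝ) < ε ^ m := pow_pos hε0 m
  have hεN_lb : 1/(6*ε^m) - ε ≤ ε * N := by
    have h := mul_le_mul_of_nonneg_left hNgt.le hε0.le
    have heq : ε * (1 / (6 * ε ^ (m+1))) = 1 / (6 * ε ^ m) := by
      rw [pow_succ]; field_simp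
    nlinarith [heq]
  have hinv10 : (10:ℝ) ≤ 1/ε := by rw [le_div_iff₀ hε0]; linarith
  have hexp1 : Real.exp 1 ≤ 2.7182818286 := Real.exp_one_lt_d9.le
  have hexpnat : ∀ n : ℕ, Real.exp (n : ℝ) ≤ 2.7182818286 ^ n := by
    intro n
    have h1 : Real.exp ((n : ℝ)) = Real.exp 1 ^ n := by
      rw [← Real.exp_nat_mul]; norm_num
    rw [h1]
    exact pow_le_pow_left₀ (Real.exp_pos 1).le hexp1 n
  have hlogε : (2:ℝ) ≤ Real.log (1/ε) := by
    rw [Real.le_log_iff_exp_le (by positivity)]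
    calc Real.exp 2 = Real.exp ((2:ℕ):ℝ) := by norm_num
      _ ≤ 2.7182818286 ^ (2:ℕ) := hexpnat 2
      _ ≤ 10 := by norm_num
      _ ≤ 1/ε := hinv10
  have hεd : 16 * ((m+1:ℕ):ℝ) * Real.log (1/ε) ≤ ε * d := by
    have h := (div_le_iff₀ hε0).mp hd_lb
    nlinarith
  have hd320 : (320:ℝ) ≤ (d:ℝ) := by
    have h2 : (0:ℝ) < Real.log (1/ε) := by linarith
    nlinarith
  have hd0 : 0 < d := by
    by_contra h
    push_neg at h
    interval_cases d
    · norm_num at hd320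
  have hdpos : (0:ℝ) < (d:ℝ) := by exact_mod_cast hd0
  have hlogd : (5:ℝ) ≤ Real.log d := by
    rw [Real.le_log_iff_exp_le hdpos]
    calc Real.exp 5 = Real.exp ((5:ℕ):ℝ) := by norm_num
      _ ≤ 2.7182818286 ^ (5:ℕ) := hexpnat 5
      _ ≤ 320 := by norm_num
      _ ≤ (d:ℝ) := hd320
  have hlog6 : (8/5 : ℝ) ≤ Real.log 6 := by
    rw [Real.le_log_iff_exp_le (by norm_num)]
    have h5 : Real.exp (8/5 : ℝ) ^ (5:ℕ) = Real.exp (8:ℝ) := by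
      rw [← Real.exp_nat_mul]; norm_num
    have h8 : Real.exp (8:ℝ) ≤ 7776 := by
      have := hexpnat 8
      norm_num at this
      linarith
    have h6 : Real.exp (8/5 : ℝ) ^ (5:ℕ) ≤ (6:ℝ) ^ (5:ℕ) := by
      rw [h5]; norm_num [h8]
    exact le_of_pow_le_pow_left₀ (by norm_num) (by norm_num) h6
  have hlog2lt : Real.log 2 < 0.6931471808 := Real.log_two_lt_d9
  have hlog2gt : 0.6931471803 < Real.log 2 := Real.log_two_gt_d9
  have hk_ge : ((m+1:ℕ):ℝ) * Real.log d ≤ (k:ℝ) := Nat.le_ceil _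
  have hεN0 : 0 ≤ ε * N := by positivity
  set Good : (Fin N → Fin d → Bool) → Prop := fun B =>
      (∀ i, ε * d / 2 ≤ ((Finset.univ.filter fun j => B i j = true).card : ℝ)) ∧
      (∀ j, ε * (N : ℝ) / 2 ≤ ((Finset.univ.filter fun i => B i j = true).card : ℝ) ∧
          ((Finset.univ.filter fun i => B i j = true).card : ℝ) ≤ 2 * ε * (N : ℝ)) ∧
      (∀ I : Finset (Fin N), I.card = k →
        ∀ J : Finset (Fin d), J.card = m + 1 → ∃ i ∈ I, ∃ j ∈ J, B i j = false)
    with hGood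
  -- the per-matrix union bound
  have key : ∀ B : Fin N → Fin d → Bool, BFaux.ind (¬ Good B) ≤
      (∑ i : Fin N, BFaux.ind ((BFaux.cnt (B i) : ℝ) ≤ ε * d / 2))
      + ((∑ j : Fin d, BFaux.ind ((BFaux.cnt (fun i => B i j) : ℝ) ≤ ε * N / 2))
        + ∑ j : Fin d, BFaux.ind (2 * ε * N ≤ (BFaux.cnt (fun i => B i j) : ℝ)))
      + ∑ I ∈ Finset.powersetCard k (Finset.univ : Finset (Fin N)),
          ∑ J ∈ Finset.powersetCard (m+1) (Finset.univ : Finset (Fin d)),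
            BFaux.ind (∀ i ∈ I, ∀ j ∈ J, B i j = true) := by
    intro B
    have hn1 : (0:ℝ) ≤ ∑ i : Fin N, BFaux.ind ((BFaux.cnt (B i) : ℝ) ≤ ε * d / 2) :=
      Finset.sum_nonneg fun _ _ => BFaux.ind_nonneg _
    have hn2 : (0:ℝ) ≤ ∑ j : Fin d, BFaux.ind ((BFaux.cnt (fun i => B i j) : ℝ) ≤ ε * N / 2) :=
      Finset.sum_nonneg fun _ _ => BFaux.ind_nonneg _
    have hn3 : (0:ℝ) ≤ ∑ j : Fin d, BFaux.ind (2 * ε * N ≤ (BFaux.cnt (fun i => B i j) : ℝ)) :=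
      Finset.sum_nonneg fun _ _ => BFaux.ind_nonneg _
    have hn4 : (0:ℝ) ≤ ∑ I ∈ Finset.powersetCard k (Finset.univ : Finset (Fin N)),
          ∑ J ∈ Finset.powersetCard (m+1) (Finset.univ : Finset (Fin d)),
            BFaux.ind (∀ i ∈ I, ∀ j ∈ J, B i j = true) :=
      Finset.sum_nonneg fun _ _ => Finset.sum_nonneg fun _ _ => BFaux.ind_nonneg _
    by_cases hG : Good B
    · rw [BFaux.ind, if_neg (not_not_intro hG)]
      linarith
    · rw [BFaux.ind_eq_one hG]
      rw [hGood] at hG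
      simp only [not_and_or] at hG
      rcases hG with hA | hB2 | hB3
      · rw [not_forall] at hA
        obtain ⟨i0, hi0⟩ := hA
        rw [not_le] at hi0
        have hone : BFaux.ind ((BFaux.cnt (B i0) : ℝ) ≤ ε * d / 2) = 1 :=
          BFaux.ind_eq_one (le_of_lt hi0)
        have h1 : (1:ℝ) ≤ ∑ i : Fin N, BFaux.ind ((BFaux.cnt (B i) : ℝ) ≤ ε * d / 2) := by
          rw [← hone]
          exact Finset.single_le_sum (f := fun i => BFaux.ind ((BFaux.cnt (B i) : ℝ) ≤ ε * d / 2))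
            (fun i _ => BFaux.ind_nonneg _) (Finset.mem_univ i0)
        linarith
      · rw [not_forall] at hB2
        obtain ⟨j0, hj0⟩ := hB2
        rw [not_and_or] at hj0
        rcases hj0 with h | h
        · rw [not_le] at h
          have hone : BFaux.ind ((BFaux.cnt (fun i => B i j0) : ℝ) ≤ ε * N / 2) = 1 :=
            BFaux.ind_eq_one (le_of_lt h)
          have h1 : (1:ℝ) ≤ ∑ j : Fin d,
              BFaux.ind ((BFaux.cnt (fun i => B i j) : ℝ) ≤ ε * N / 2) := by
            rw [← hone]
            exact Finset.single_le_sum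
              (f := fun j => BFaux.ind ((BFaux.cnt (fun i => B i j) : ℝ) ≤ ε * N / 2))
              (fun j _ => BFaux.ind_nonneg _) (Finset.mem_univ j0)
          linarith
        · rw [not_le] at h
          have hone : BFaux.ind (2 * ε * N ≤ (BFaux.cnt (fun i => B i j0) : ℝ)) = 1 :=
            BFaux.ind_eq_one (le_of_lt h)
          have h1 : (1:ℝ) ≤ ∑ j : Fin d,
              BFaux.ind (2 * ε * N ≤ (BFaux.cnt (fun i => B i j) : ℝ)) := by
            rw [← hone]
            exact Finset.single_le_sum
              (f := fun j => BFaux.ind (2 * ε * N ≤ (BFaux.cnt (fun i => B i j) : ℝ)))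
              (fun j _ => BFaux.ind_nonneg _) (Finset.mem_univ j0)
          linarith
      · push_neg at hB3
        obtain ⟨I0, hI0card, J0, hJ0card, hall⟩ := hB3
        simp only [Bool.not_eq_false] at hall
        have hone : BFaux.ind (∀ i ∈ I0, ∀ j ∈ J0, B i j = true) = 1 :=
          BFaux.ind_eq_one hall
        have hJmem : J0 ∈ Finset.powersetCard (m+1) (Finset.univ : Finset (Fin d)) :=
          Finset.mem_powersetCard_univ.mpr hJ0card
        have hImem : I0 ∈ Finset.powersetCard k (Finset.univ : Finset (Fin N)) :=
          Finset.mem_powersetCard_univ.mpr hI0card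
        have h1 : (1:ℝ) ≤ ∑ J ∈ Finset.powersetCard (m+1) (Finset.univ : Finset (Fin d)),
            BFaux.ind (∀ i ∈ I0, ∀ j ∈ J, B i j = true) := by
          rw [← hone]
          exact Finset.single_le_sum
            (f := fun J => BFaux.ind (∀ i ∈ I0, ∀ j ∈ J, B i j = true)) 
            (fun J _ => BFaux.ind_nonneg _) hJmem
        have h2 : (1:ℝ) ≤ ∑ I ∈ Finset.powersetCard k (Finset.univ : Finset (Fin N)),
            ∑ J ∈ Finset.powersetCard (m+1) (Finset.univ : Finset (Fin d)),
              BFaux.ind (∀ i ∈ I, ∀ j ∈ J, B i j = true) := by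
          refine le_trans h1 ?_
          exact Finset.single_le_sum
            (f := fun I => ∑ J ∈ Finset.powersetCard (m+1) (Finset.univ : Finset (Fin d)),
              BFaux.ind (∀ i ∈ I, ∀ j ∈ J, B i j = true))
            (fun I _ => Finset.sum_nonneg fun J _ => BFaux.ind_nonneg _) hImem
        linarith
  -- marginal event weights
  have hWnn : ∀ B : Fin N → Fin d → Bool, (0:ℝ) ≤ ∏ i, BFaux.Wv ε (B i) :=
    fun B => Finset.prod_nonneg fun i _ => BFaux.Wv_nonneg hε0.le hεle _
  have hrowEq : ∀ i0 : Fin N,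
      ∑ B : Fin N → Fin d → Bool, (∏ i, BFaux.Wv ε (B i))
          * BFaux.ind ((BFaux.cnt (B i0) : ℝ) ≤ ε * d / 2)
        = ∑ f : Fin d → Bool, BFaux.Wv ε f * BFaux.ind ((BFaux.cnt f : ℝ) ≤ ε * d / 2) :=
    fun i0 => BFaux.E_pick i0 (fun f => (BFaux.cnt f : ℝ) ≤ ε * d / 2)
  have hcolLoEq : ∀ j0 : Fin d,
      ∑ B : Fin N → Fin d → Bool, (∏ i, BFaux.Wv ε (B i))
          * BFaux.ind ((BFaux.cnt (fun i => B i j0) : ℝ) ≤ ε * N / 2)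
        = ∑ f : Fin N → Bool, BFaux.Wv ε f * BFaux.ind ((BFaux.cnt f : ℝ) ≤ ε * N / 2) :=
    fun j0 => BFaux.E_pick_col j0 (fun f => (BFaux.cnt f : ℝ) ≤ ε * N / 2)
  have hcolHiEq : ∀ j0 : Fin d,
      ∑ B : Fin N → Fin d → Bool, (∏ i, BFaux.Wv ε (B i))
          * BFaux.ind (2 * ε * N ≤ (BFaux.cnt (fun i => B i j0) : ℝ))
        = ∑ f : Fin N → Bool, BFaux.Wv ε f * BFaux.ind (2 * ε * N ≤ (BFaux.cnt f : ℝ)) :=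
    fun j0 => BFaux.E_pick_col j0 (fun f => 2 * ε * N ≤ (BFaux.cnt f : ℝ))
  -- tail bounds
  have hRowT : ∑ f : Fin d → Bool, BFaux.Wv ε f * BFaux.ind ((BFaux.cnt f : ℝ) ≤ ε * d / 2)
      ≤ Real.exp (-(ε * d / 2 * Real.log (1/2))) * (1 - ε + ε * (1/2)) ^ d := by
    have h := BFaux.tail_lower (α := Fin d) hε0.le hεle (by norm_num : (0:ℝ) < 1/2)
      (by norm_num : (1:ℝ)/2 ≤ 1) (ε * d / 2)
    simpa using h
  have hColLoT : ∑ f : Fin N → Bool, BFaux.Wv ε f * BFaux.ind ((BFaux.cnt f : ℝ) ≤ ε * N / 2)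
      ≤ Real.exp (-(ε * N / 2 * Real.log (1/2))) * (1 - ε + ε * (1/2)) ^ N := by
    have h := BFaux.tail_lower (α := Fin N) hε0.le hεle (by norm_num : (0:ℝ) < 1/2)
      (by norm_num : (1:ℝ)/2 ≤ 1) (ε * N / 2)
    simpa using h
  have hColHiT : ∑ f : Fin N → Bool, BFaux.Wv ε f * BFaux.ind (2 * ε * N ≤ (BFaux.cnt f : ℝ))
      ≤ Real.exp (-(2 * ε * N * Real.log 2)) * (1 - ε + ε * 2) ^ N := by
    have h := BFaux.tail_upper (α := Fin N) hε0.le hεle (by norm_num : (1:ℝ) ≤ 2) (2 * ε * N)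
    simpa using h
  -- the main bound
  have main : ∑ B : Fin N → Fin d → Bool, (∏ i, BFaux.Wv ε (B i)) * BFaux.ind (¬ Good B)
      ≤ (N:ℝ) * (Real.exp (-(ε * d / 2 * Real.log (1/2))) * (1 - ε + ε * (1/2)) ^ d)
        + ((d:ℝ) * (Real.exp (-(ε * N / 2 * Real.log (1/2))) * (1 - ε + ε * (1/2)) ^ N)
          + (d:ℝ) * (Real.exp (-(2 * ε * N * Real.log 2)) * (1 - ε + ε * 2) ^ N))
        + (N.choose k : ℝ) * ((d.choose (m+1) : ℝ) * ε ^ (k * (m+1))) := by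
    calc ∑ B : Fin N → Fin d → Bool, (∏ i, BFaux.Wv ε (B i)) * BFaux.ind (¬ Good B)
        ≤ ∑ B : Fin N → Fin d → Bool, (∏ i, BFaux.Wv ε (B i)) *
            ((∑ i : Fin N, BFaux.ind ((BFaux.cnt (B i) : ℝ) ≤ ε * d / 2))
            + ((∑ j : Fin d, BFaux.ind ((BFaux.cnt (fun i => B i j) : ℝ) ≤ ε * N / 2))
              + ∑ j : Fin d, BFaux.ind (2 * ε * N ≤ (BFaux.cnt (fun i => B i j) : ℝ)))
            + ∑ I ∈ Finset.powersetCard k (Finset.univ : Finset (Fin N)),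
                ∑ J ∈ Finset.powersetCard (m+1) (Finset.univ : Finset (Fin d)),
                  BFaux.ind (∀ i ∈ I, ∀ j ∈ J, B i j = true)) :=
          Finset.sum_le_sum fun B _ => mul_le_mul_of_nonneg_left (key B) (hWnn B)
      _ = (∑ i0 : Fin N, ∑ B : Fin N → Fin d → Bool, (∏ i, BFaux.Wv ε (B i))
              * BFaux.ind ((BFaux.cnt (B i0) : ℝ) ≤ ε * d / 2))
          + ((∑ j0 : Fin d, ∑ B : Fin N → Fin d → Bool, (∏ i, BFaux.Wv ε (B i))
              * BFaux.ind ((BFaux.cnt (fun i => B i j0) : ℝ) ≤ ε * N / 2))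
            + ∑ j0 : Fin d, ∑ B : Fin N → Fin d → Bool, (∏ i, BFaux.Wv ε (B i))
              * BFaux.ind (2 * ε * N ≤ (BFaux.cnt (fun i => B i j0) : ℝ)))
          + ∑ I ∈ Finset.powersetCard k (Finset.univ : Finset (Fin N)),
              ∑ J ∈ Finset.powersetCard (m+1) (Finset.univ : Finset (Fin d)),
                ∑ B : Fin N → Fin d → Bool, (∏ i, BFaux.Wv ε (B i))
                  * BFaux.ind (∀ i ∈ I, ∀ j ∈ J, B i j = true) := by
          simp only [mul_add, Finset.mul_sum, Finset.sum_add_distrib]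
          congr 1
          · congr 1
            · exact Finset.sum_comm
            · congr 1
              · exact Finset.sum_comm
              · exact Finset.sum_comm
          · rw [Finset.sum_comm]
            exact Finset.sum_congr rfl fun I _ => Finset.sum_comm
      _ ≤ _ := by
          gcongr ?_ + (?_ + ?_) + ?_
          · calc ∑ i0 : Fin N, ∑ B : Fin N → Fin d → Bool, (∏ i, BFaux.Wv ε (B i))
                  * BFaux.ind ((BFaux.cnt (B i0) : ℝ) ≤ ε * d / 2)
                = ∑ i0 : Fin N, ∑ f : Fin d → Bool,
                    BFaux.Wv ε f * BFaux.ind ((BFaux.cnt f : ℝ) ≤ ε * d / 2) :=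
                  Finset.sum_congr rfl fun i0 _ => hrowEq i0
              _ ≤ ∑ i0 : Fin N, Real.exp (-(ε * d / 2 * Real.log (1/2)))
                    * (1 - ε + ε * (1/2)) ^ d :=
                  Finset.sum_le_sum fun i0 _ => hRowT
              _ = (N:ℝ) * (Real.exp (-(ε * d / 2 * Real.log (1/2)))
                    * (1 - ε + ε * (1/2)) ^ d) := by
                  rw [Finset.sum_const, Finset.card_univ, Fintype.card_fin, nsmul_eq_mul]
          · calc ∑ j0 : Fin d, ∑ B : Fin N → Fin d → Bool, (∏ i, BFaux.Wv ε (B i))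
                  * BFaux.ind ((BFaux.cnt (fun i => B i j0) : ℝ) ≤ ε * N / 2)
                = ∑ j0 : Fin d, ∑ f : Fin N → Bool,
                    BFaux.Wv ε f * BFaux.ind ((BFaux.cnt f : ℝ) ≤ ε * N / 2) :=
                  Finset.sum_congr rfl fun j0 _ => hcolLoEq j0
              _ ≤ ∑ j0 : Fin d, Real.exp (-(ε * N / 2 * Real.log (1/2)))
                    * (1 - ε + ε * (1/2)) ^ N :=
                  Finset.sum_le_sum fun j0 _ => hColLoT
              _ = (d:ℝ) * (Real.exp (-(ε * N / 2 * Real.log (1/2)))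
                    * (1 - ε + ε * (1/2)) ^ N) := by
                  rw [Finset.sum_const, Finset.card_univ, Fintype.card_fin, nsmul_eq_mul]
          · calc ∑ j0 : Fin d, ∑ B : Fin N → Fin d → Bool, (∏ i, BFaux.Wv ε (B i))
                  * BFaux.ind (2 * ε * N ≤ (BFaux.cnt (fun i => B i j0) : ℝ))
                = ∑ j0 : Fin d, ∑ f : Fin N → Bool,
                    BFaux.Wv ε f * BFaux.ind (2 * ε * N ≤ (BFaux.cnt f : ℝ)) :=
                  Finset.sum_congr rfl fun j0 _ => hcolHiEq j0
              _ ≤ ∑ j0 : Fin d, Real.exp (-(2 * ε * N * Real.log 2)) * (1 - ε + ε * 2) ^ N :=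
                  Finset.sum_le_sum fun j0 _ => hColHiT
              _ = (d:ℝ) * (Real.exp (-(2 * ε * N * Real.log 2)) * (1 - ε + ε * 2) ^ N) := by
                  rw [Finset.sum_const, Finset.card_univ, Fintype.card_fin, nsmul_eq_mul]
          · calc ∑ I ∈ Finset.powersetCard k (Finset.univ : Finset (Fin N)),
                  ∑ J ∈ Finset.powersetCard (m+1) (Finset.univ : Finset (Fin d)),
                    ∑ B : Fin N → Fin d → Bool, (∏ i, BFaux.Wv ε (B i))
                      * BFaux.ind (∀ i ∈ I, ∀ j ∈ J, B i j = true)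
                = ∑ I ∈ Finset.powersetCard k (Finset.univ : Finset (Fin N)),
                  ∑ J ∈ Finset.powersetCard (m+1) (Finset.univ : Finset (Fin d)),
                    ε ^ (k * (m+1)) := by
                  refine Finset.sum_congr rfl fun I hI => Finset.sum_congr rfl fun J hJ => ?_
                  rw [BFaux.E_block I J, Finset.mem_powersetCard_univ.mp hI,
                    Finset.mem_powersetCard_univ.mp hJ]
              _ = (N.choose k : ℝ) * ((d.choose (m+1) : ℝ) * ε ^ (k * (m+1))) := by
                  simp only [Finset.sum_const, Finset.card_powersetCard, Finset.card_univ,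
                    Fintype.card_fin, nsmul_eq_mul]
                  try ring
              _ ≤ (N.choose k : ℝ) * ((d.choose (m+1) : ℝ) * ε ^ (k * (m+1))) := le_rfl
  -- numeric bounds
  have hloghalf : Real.log (1/2 : ℝ) = - Real.log 2 := by rw [one_div, Real.log_inv]
  have hlogeps : Real.log (1/ε) = - Real.log ε := by rw [one_div, Real.log_inv]
  have hexp3 : Real.exp 1 ≤ 3 := by linarith only [hexp1]
  have hεm1le : ε ^ (m+1) ≤ 1/10 := by
    calc ε ^ (m+1) ≤ ε ^ 1 := pow_le_pow_of_le_one hε0.le hεle (by omega)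
      _ = ε := pow_one ε
      _ ≤ 1/10 := hε1.le
  have hεm1nn : (0:ℝ) ≤ ε ^ (m+1) := by positivity
  have hNnn : (0:ℝ) ≤ (N:ℝ) := Nat.cast_nonneg N
  have hrowNum : (N:ℝ) * (Real.exp (-(ε * d / 2 * Real.log (1/2))) * (1 - ε + ε * (1/2)) ^ d)
      ≤ 1/60 := by
    have hb1 : (0:ℝ) ≤ 1 - ε + ε * (1/2) := by linarith only [hε0, hε1]
    have hb2 : (1 - ε + ε * (1/2) : ℝ) ≤ Real.exp (-(ε/2)) := by
      have h := Real.add_one_le_exp (-(ε/2)); linarith only [h]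
    have hpow : (1 - ε + ε * (1/2) : ℝ) ^ d ≤ Real.exp ((d:ℝ) * (-(ε/2))) := by
      calc (1 - ε + ε * (1/2) : ℝ) ^ d ≤ Real.exp (-(ε/2)) ^ d := pow_le_pow_left₀ hb1 hb2 d
        _ = Real.exp ((d:ℝ) * (-(ε/2))) := (Real.exp_nat_mul _ d).symm
    have hprod : Real.exp (-(ε * d / 2 * Real.log (1/2))) * (1 - ε + ε * (1/2)) ^ d
        ≤ Real.exp (-(ε * d / 2 * Real.log (1/2)) + (d:ℝ) * (-(ε/2))) := by
      rw [Real.exp_add]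
      exact mul_le_mul_of_nonneg_left hpow (Real.exp_nonneg _)
    have hmL : (0:ℝ) ≤ ((m+1:ℕ):ℝ) * Real.log (1/ε) := by
      have : (0:ℝ) ≤ Real.log (1/ε) := by linarith only [hlogε]
      positivity
    have harg : -(ε * d / 2 * Real.log (1/2)) + (d:ℝ) * (-(ε/2))
        ≤ ((2*(m+1) : ℕ):ℝ) * Real.log ε := by
      rw [hloghalf]
      have h30 : (0:ℝ) ≤ 1 - Real.log 2 := by linarith only [hlog2lt]
      have hmul := mul_le_mul_of_nonneg_right hεd h30
      have hcast : ((2*(m+1) : ℕ):ℝ) = 2 * ((m+1:ℕ):ℝ) := by push_cast; ring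
      rw [hcast]
      have hlogε2 : Real.log ε = - Real.log (1/ε) := by rw [hlogeps]; ring
      rw [hlogε2]
      nlinarith only [hmul, mul_nonneg hmL h30, hεd, hlog2lt, hlog2gt,
        mul_nonneg hmL (by linarith only [hlog2lt] : (0:ℝ) ≤ 1 - Real.log 2 - 0.3)]
    have hexpval : Real.exp (((2*(m+1) : ℕ):ℝ) * Real.log ε) = ε ^ (2*(m+1)) := by
      rw [Real.exp_nat_mul, Real.exp_log hε0]
    have hfinal : Real.exp (-(ε * d / 2 * Real.log (1/2))) * (1 - ε + ε * (1/2)) ^ d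
        ≤ ε ^ (2*(m+1)) := by
      rw [← hexpval]
      exact hprod.trans (Real.exp_le_exp.mpr harg)
    have h2m : ε ^ (2*(m+1)) = ε ^ (m+1) * ε ^ (m+1) := by rw [two_mul, pow_add]
    calc (N:ℝ) * (Real.exp (-(ε * d / 2 * Real.log (1/2))) * (1 - ε + ε * (1/2)) ^ d)
        ≤ (N:ℝ) * ε ^ (2*(m+1)) := mul_le_mul_of_nonneg_left hfinal hNnn
      _ = ((N:ℝ) * ε ^ (m+1)) * ε ^ (m+1) := by rw [h2m]; ring
      _ ≤ (1/6) * (1/10) := by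
          apply mul_le_mul hNεl hεm1le hεm1nn (by norm_num)
      _ ≤ 1/60 := by norm_num
  have hcolexp : (d:ℝ) * Real.exp (-(ε * N / 8)) ≤ 3/20 := by
    have h1 : (d:ℝ) * Real.exp (-(ε * N / 8))
        ≤ (1/20 * Real.exp (1 / (48 * ε ^ m))) * Real.exp (-(ε * N / 8)) :=
      mul_le_mul_of_nonneg_right hd_ub (Real.exp_nonneg _)
    have h2 : (1/20 * Real.exp (1 / (48 * ε ^ m))) * Real.exp (-(ε * N / 8))
        = 1/20 * Real.exp (1 / (48 * ε ^ m) + -(ε * N / 8)) := by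
      rw [Real.exp_add]; ring
    have h3 : 1 / (48 * ε ^ m) + -(ε * N / 8) ≤ 1 := by
      have heq : 1 / (48 * ε ^ m) = (1 / (6 * ε ^ m)) / 8 := by
        field_simp; ring
      rw [heq]
      have h3' : (1 / (6 * ε ^ m) - ε) / 8 ≤ ε * N / 8 := by linarith only [hεN_lb]
      linarith only [h3', hε1, hε0]
    have h4 : Real.exp (1 / (48 * ε ^ m) + -(ε * N / 8)) ≤ 3 :=
      (Real.exp_le_exp.mpr h3).trans hexp3
    linarith only [h1, h2, h4, Real.exp_nonneg (-(ε * N / 8))]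
  have hColLoNum : (d:ℝ) * (Real.exp (-(ε * N / 2 * Real.log (1/2))) * (1 - ε + ε * (1/2)) ^ N)
      ≤ 3/20 := by
    have hb1 : (0:ℝ) ≤ 1 - ε + ε * (1/2) := by linarith only [hε0, hε1]
    have hb2 : (1 - ε + ε * (1/2) : ℝ) ≤ Real.exp (-(ε/2)) := by
      have h := Real.add_one_le_exp (-(ε/2)); linarith only [h]
    have hpow : (1 - ε + ε * (1/2) : ℝ) ^ N ≤ Real.exp ((N:ℝ) * (-(ε/2))) := by
      calc (1 - ε + ε * (1/2) : ℝ) ^ N ≤ Real.exp (-(ε/2)) ^ N := pow_le_pow_left₀ hb1 hb2 N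
        _ = Real.exp ((N:ℝ) * (-(ε/2))) := (Real.exp_nat_mul _ N).symm
    have hprod : Real.exp (-(ε * N / 2 * Real.log (1/2))) * (1 - ε + ε * (1/2)) ^ N
        ≤ Real.exp (-(ε * N / 2 * Real.log (1/2)) + (N:ℝ) * (-(ε/2))) := by
      rw [Real.exp_add]
      exact mul_le_mul_of_nonneg_left hpow (Real.exp_nonneg _)
    have harg : -(ε * N / 2 * Real.log (1/2)) + (N:ℝ) * (-(ε/2)) ≤ -(ε * N / 8) := by
      rw [hloghalf]
      nlinarith only [hεN0, hlog2lt]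
    have hfinal : Real.exp (-(ε * N / 2 * Real.log (1/2))) * (1 - ε + ε * (1/2)) ^ N
        ≤ Real.exp (-(ε * N / 8)) := hprod.trans (Real.exp_le_exp.mpr harg)
    calc (d:ℝ) * (Real.exp (-(ε * N / 2 * Real.log (1/2))) * (1 - ε + ε * (1/2)) ^ N)
        ≤ (d:ℝ) * Real.exp (-(ε * N / 8)) := mul_le_mul_of_nonneg_left hfinal hdpos.le
      _ ≤ 3/20 := hcolexp
  have hColHiNum : (d:ℝ) * (Real.exp (-(2 * ε * N * Real.log 2)) * (1 - ε + ε * 2) ^ N)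
      ≤ 3/20 := by
    have hb1 : (0:ℝ) ≤ 1 - ε + ε * 2 := by linarith only [hε0, hε1]
    have hb2 : (1 - ε + ε * 2 : ℝ) ≤ Real.exp ε := by
      have h := Real.add_one_le_exp ε; linarith only [h]
    have hpow : (1 - ε + ε * 2 : ℝ) ^ N ≤ Real.exp ((N:ℝ) * ε) := by
      calc (1 - ε + ε * 2 : ℝ) ^ N ≤ Real.exp ε ^ N := pow_le_pow_left₀ hb1 hb2 N
        _ = Real.exp ((N:ℝ) * ε) := (Real.exp_nat_mul _ N).symm
    have hprod : Real.exp (-(2 * ε * N * Real.log 2)) * (1 - ε + ε * 2) ^ N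
        ≤ Real.exp (-(2 * ε * N * Real.log 2) + (N:ℝ) * ε) := by
      rw [Real.exp_add]
      exact mul_le_mul_of_nonneg_left hpow (Real.exp_nonneg _)
    have harg : -(2 * ε * N * Real.log 2) + (N:ℝ) * ε ≤ -(ε * N / 8) := by
      nlinarith only [hεN0, hlog2gt]
    have hfinal : Real.exp (-(2 * ε * N * Real.log 2)) * (1 - ε + ε * 2) ^ N
        ≤ Real.exp (-(ε * N / 8)) := hprod.trans (Real.exp_le_exp.mpr harg)
    calc (d:ℝ) * (Real.exp (-(2 * ε * N * Real.log 2)) * (1 - ε + ε * 2) ^ N)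
        ≤ (d:ℝ) * Real.exp (-(ε * N / 8)) := mul_le_mul_of_nonneg_left hfinal hdpos.le
      _ ≤ 3/20 := hcolexp
  have hBlkNum : (N.choose k : ℝ) * ((d.choose (m+1) : ℝ) * ε ^ (k * (m+1))) ≤ 1/20 := by
    have c1 : (N.choose k : ℝ) ≤ (N:ℝ) ^ k := by
      calc (N.choose k : ℝ) ≤ (N:ℝ) ^ k / (k.factorial : ℝ) := by
            exact_mod_cast Nat.choose_le_pow_div k N
        _ ≤ (N:ℝ) ^ k := by
            apply div_le_self (by positivity)
            exact_mod_cast Nat.one_le_iff_ne_zero.mpr k.factorial_pos.ne'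
    have c2 : (d.choose (m+1) : ℝ) ≤ (d:ℝ) ^ (m+1) := by
      calc (d.choose (m+1) : ℝ) ≤ (d:ℝ) ^ (m+1) / ((m+1).factorial : ℝ) := by
            exact_mod_cast Nat.choose_le_pow_div (m+1) d
        _ ≤ (d:ℝ) ^ (m+1) := by
            apply div_le_self (by positivity)
            exact_mod_cast Nat.one_le_iff_ne_zero.mpr (m+1).factorial_pos.ne'
    have hεpow : ε ^ (k * (m+1)) = (ε ^ (m+1)) ^ k := by
      rw [mul_comm k (m+1), pow_mul]
    have step1 : (N.choose k : ℝ) * ((d.choose (m+1) : ℝ) * ε ^ (k * (m+1)))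
        ≤ (N:ℝ) ^ k * ((d:ℝ) ^ (m+1) * ε ^ (k * (m+1))) := by
      have hεp : (0:ℝ) ≤ ε ^ (k * (m+1)) := by positivity
      apply mul_le_mul c1 (mul_le_mul c2 le_rfl hεp (by positivity)) (by positivity) (by positivity)
    have step2 : (N:ℝ) ^ k * ((d:ℝ) ^ (m+1) * ε ^ (k * (m+1)))
        = ((N:ℝ) * ε ^ (m+1)) ^ k * (d:ℝ) ^ (m+1) := by
      rw [hεpow, mul_pow]; ring
    have step3 : ((N:ℝ) * ε ^ (m+1)) ^ k * (d:ℝ) ^ (m+1)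
        ≤ (1/6 : ℝ) ^ k * (d:ℝ) ^ (m+1) := by
      apply mul_le_mul_of_nonneg_right _ (by positivity)
      exact pow_le_pow_left₀ (by positivity) hNεl k
    have e1 : ((1:ℝ)/6) ^ k = Real.exp (-((k:ℝ) * Real.log 6)) := by
      rw [Real.exp_neg, Real.exp_nat_mul, Real.exp_log (by norm_num : (0:ℝ) < 6),
        one_div, inv_pow]
    have e2 : (d:ℝ) ^ (m+1) = Real.exp (((m+1:ℕ):ℝ) * Real.log d) := by
      rw [Real.exp_nat_mul, Real.exp_log hdpos]
    have ht5 : (5:ℝ) ≤ ((m+1:ℕ):ℝ) * Real.log d := by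
      nlinarith only [hm1, hlogd,
        mul_le_mul_of_nonneg_right hm1 (by linarith only [hlogd] : (0:ℝ) ≤ Real.log d)]
    have hexpo : -((k:ℝ) * Real.log 6) + ((m+1:ℕ):ℝ) * Real.log d ≤ -3 := by
      have hlog6nn : (0:ℝ) ≤ Real.log 6 := by linarith only [hlog6]
      have hkl6 := mul_le_mul_of_nonneg_right hk_ge hlog6nn
      nlinarith only [hkl6, ht5, hlog6,
        mul_le_mul_of_nonneg_left hlog6
          (by linarith only [ht5] : (0:ℝ) ≤ ((m+1:ℕ):ℝ) * Real.log d)]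
    have e3 : ((1:ℝ)/6) ^ k * (d:ℝ) ^ (m+1) ≤ Real.exp (-3) := by
      rw [e1, e2, ← Real.exp_add]
      exact Real.exp_le_exp.mpr hexpo
    have e4 : Real.exp (-3 : ℝ) ≤ 1/20 := by
      have h20 : (20:ℝ) ≤ Real.exp 3 := by
        have hh : Real.exp (3:ℝ) = Real.exp 1 ^ 3 := by
          rw [← Real.exp_nat_mul]; norm_num
        have hcb : (2.7182818283 : ℝ) ^ 3 ≤ Real.exp 1 ^ 3 :=
          pow_le_pow_left₀ (by norm_num) Real.exp_one_gt_d9.le 3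
        rw [hh]
        calc (20:ℝ) ≤ (2.7182818283 : ℝ) ^ 3 := by norm_num
          _ ≤ Real.exp 1 ^ 3 := hcb
      rw [Real.exp_neg]
      rw [show (1:ℝ)/20 = 20⁻¹ by norm_num]
      exact inv_anti₀ (by norm_num) h20
    linarith only [step1, step3, e3, e4, step2.le, step2.ge]
  -- conclusion
  have hsum1 : ∑ B : Fin N → Fin d → Bool, (∏ i, BFaux.Wv ε (B i)) = 1 := BFaux.sum_Wmat
  have hex : ∃ B : Fin N → Fin d → Bool, Good B := by
    by_contra hno
    push_neg at hno
    have hone : ∀ B : Fin N → Fin d → Bool, BFaux.ind (¬ Good B) = 1 :=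
      fun B => BFaux.ind_eq_one (hno B)
    have heq : ∑ B : Fin N → Fin d → Bool, (∏ i, BFaux.Wv ε (B i)) * BFaux.ind (¬ Good B)
        = 1 := by
      simp only [hone, mul_one]
      exact hsum1
    rw [heq] at main
    linarith only [main, hrowNum, hColLoNum, hColHiNum, hBlkNum]
  obtain ⟨B, hB⟩ := hex
  rw [hGood] at hB
  exact ⟨B, hB⟩
end
end

section
/- Data-processing from KL divergence to binary KL: let (Ω, F) be a measurable space with probability measures P_1 and P_2, and let Z : Ω → [0,1] be F-measurable. Then KL(P_1 ‖ P_2) ≥ kl(E_1[Z] ‖ E_2[Z]), where kl(p ‖ q) = p·log(p/q) + (1-p)·log((1-p)/(1-q)) is the KL divergence between Bernoulli(p) and Bernoulli(q). -/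
/-!
Passing ω to the outcome Bernoulli(Z ω) splits each measure `p` into the two sub-measures
`p * Z` and `p * (1 - Z)`. The log-sum inequality (Jensen for `x ↦ x log x` with weights `q`)
bounds each binary term by the corresponding part of `∑ p log (p / q)`, because
`p z / (q z) = p / q`; the two parts add up to the whole KL divergence.
-/

open Finset Real

theorem sum_mul_log_div_sum_le {ι : Type*} (s : Finset ι) (f g : ι → ℝ)
    (hf : ∀ i ∈ s, 0 ≤ f i) (hg : ∀ i ∈ s, 0 ≤ g i) (hfg : ∀ i ∈ s, g i = 0 → f i = 0) :
    (∑ i ∈ s, f i) * log ((∑ i ∈ s, f i) / ∑ i ∈ s, g i) ≤ ∑ i ∈ s, f i * log (f i / g i) := by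
  have hgf : ∀ i ∈ s, g i * (f i / g i) = f i := fun i hi => by
    by_cases h : g i = 0
    · simp [h, hfg i hi h]
    · exact mul_div_cancel₀ _ h
  rcases (sum_nonneg hg).eq_or_lt with hG | hG
  · have hf0 : ∀ i ∈ s, f i = 0 := fun i hi =>
      hfg i hi ((sum_eq_zero_iff_of_nonneg hg).1 hG.symm i hi)
    rw [sum_eq_zero hf0, zero_mul]
    exact (sum_eq_zero fun i hi => by simp [hf0 i hi]).ge
  · set F := ∑ i ∈ s, f i
    set G := ∑ i ∈ s, g i
    have hmean : ∑ i ∈ s, g i * (f i / g i) = F := sum_congr rfl hgf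
    have hmean_mul_log : ∑ i ∈ s, g i * (f i / g i * log (f i / g i)) =
        ∑ i ∈ s, f i * log (f i / g i) :=
      sum_congr rfl fun i hi => by rw [← mul_assoc, hgf i hi]
    have jensen := convexOn_mul_log.map_centerMass_le hg hG
      (fun i hi => Set.mem_Ici.2 (div_nonneg (hf i hi) (hg i hi)))
    simp only [centerMass, smul_eq_mul, Function.comp_apply, hmean, hmean_mul_log,
      inv_mul_eq_div] at jensen
    calc F * log (F / G) = G * (F / G * log (F / G)) := by field_simp
      _ ≤ G * ((∑ i ∈ s, f i * log (f i / g i)) / G) := mul_le_mul_of_nonneg_left jensen hG.le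
      _ = ∑ i ∈ s, f i * log (f i / g i) := by field_simp

theorem mul_mul_log_mul_div_mul_right (a b z : ℝ) :
    a * z * log (a * z / (b * z)) = a * z * log (a / b) := by
  rcases eq_or_ne z 0 with rfl | hz
  · simp
  · rw [mul_div_mul_right _ _ hz]

theorem sum_mul_log_div_sum_add_compl_le {ι : Type*} (s : Finset ι) (p q z : ι → ℝ)
    (hp : ∀ i ∈ s, 0 ≤ p i) (hq : ∀ i ∈ s, 0 ≤ q i) (hpq : ∀ i ∈ s, q i = 0 → p i = 0)
    (hz : ∀ i ∈ s, z i ∈ Set.Icc (0 : ℝ) 1) :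
    (∑ i ∈ s, p i * z i) * log ((∑ i ∈ s, p i * z i) / ∑ i ∈ s, q i * z i) +
        (∑ i ∈ s, p i * (1 - z i)) *
          log ((∑ i ∈ s, p i * (1 - z i)) / ∑ i ∈ s, q i * (1 - z i)) ≤
      ∑ i ∈ s, p i * log (p i / q i) := by
  have restrict : ∀ w : ι → ℝ, (∀ i ∈ s, 0 ≤ w i) →
      (∑ i ∈ s, p i * w i) * log ((∑ i ∈ s, p i * w i) / ∑ i ∈ s, q i * w i) ≤
        ∑ i ∈ s, p i * w i * log (p i / q i) := fun w hw =>
    calc _ ≤ ∑ i ∈ s, p i * w i * log (p i * w i / (q i * w i)) :=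
          sum_mul_log_div_sum_le s _ _ (fun i hi => mul_nonneg (hp i hi) (hw i hi))
            (fun i hi => mul_nonneg (hq i hi) (hw i hi)) fun i hi hqw => by
              rcases mul_eq_zero.1 hqw with h | h <;> simp [h, hpq i hi]
      _ = ∑ i ∈ s, p i * w i * log (p i / q i) :=
          sum_congr rfl fun i _ => mul_mul_log_mul_div_mul_right _ _ _
  calc _ ≤ ∑ i ∈ s, p i * z i * log (p i / q i) + ∑ i ∈ s, p i * (1 - z i) * log (p i / q i) :=
        add_le_add (restrict z fun i hi => (hz i hi).1)
          (restrict (1 - z ·) fun i hi => sub_nonneg.2 (hz i hi).2)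
    _ = ∑ i ∈ s, p i * log (p i / q i) := by
        rw [← sum_add_distrib]
        exact sum_congr rfl fun i _ => by ring

/-- data-processing from KL divergence to binary KL: for probability
measures `P₁, P₂` on a finite space with `P₁ ≪ P₂` and a `[0,1]`-valued random variable
`Z`, `kl(E₁[Z] ‖ E₂[Z]) ≤ KL(P₁ ‖ P₂)`. -/
theorem kl_data_processing_binary {Ω : Type*} [Fintype Ω] (P1 P2 : Ω → ℝ) (Z : Ω → ℝ)
    (hP1 : ∀ ω, 0 ≤ P1 ω) (hP1sum : ∑ ω : Ω, P1 ω = 1)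
    (hP2 : ∀ ω, 0 ≤ P2 ω) (hP2sum : ∑ ω : Ω, P2 ω = 1)
    (habs : ∀ ω, P2 ω = 0 → P1 ω = 0)
    (hZ : ∀ ω, Z ω ∈ Set.Icc (0 : ℝ) 1) :
    (∑ ω : Ω, P1 ω * Z ω) *
        Real.log ((∑ ω : Ω, P1 ω * Z ω) / (∑ ω : Ω, P2 ω * Z ω)) +
      (1 - ∑ ω : Ω, P1 ω * Z ω) *
        Real.log ((1 - ∑ ω : Ω, P1 ω * Z ω) / (1 - ∑ ω : Ω, P2 ω * Z ω)) ≤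
      ∑ ω : Ω, P1 ω * Real.log (P1 ω / P2 ω) := by
  have one_sub_expectation : ∀ P : Ω → ℝ, ∑ ω, P ω = 1 →
      1 - ∑ ω, P ω * Z ω = ∑ ω, P ω * (1 - Z ω) := fun P hP => by
    simp only [mul_sub, mul_one, sum_sub_distrib, hP]
  rw [one_sub_expectation P1 hP1sum, one_sub_expectation P2 hP2sum]
  exact sum_mul_log_div_sum_add_compl_le univ P1 P2 Z (fun ω _ => hP1 ω) (fun ω _ => hP2 ω)
    (fun ω _ => habs ω) fun ω _ => hZ ω
end
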